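/- arXiv:2604.20296 — 5 statements merged into one kernel-verified Lean document; each statement's English description precedes it below -/
import Mathlib

section
/- Let τ_t ≤ τ_{t+1} be two calendar times. Then for every survival time s, the risk set satisfies the update identity R(τ_{t+1}, s) = R(τ_t, s) ∪ {i ∈ {1,…,N} : τ_t < τ_i + R_i and max(τ_t − τ_i, 0) < s ≤ min(max(τ_{t+1} − τ_i, 0), R_i)}, where R_i = min(Y_i, C_i). (The condition τ_t < τ_i + R_i is exactly η_{i,t} = 0, i.e., the outcome of subject i is not yet observed at calendar time τ_t.) -/
/-- risk set update identity between two calendar times `τ_t ≤ τ_{t+1}`: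
`R(τ_{t+1}, s) = R(τ_t, s) ∪ {i : τ_t < τ_i + R_i and max(τ_t − τ_i, 0) < s ≤
min(max(τ_{t+1} − τ_i, 0), R_i)}` where `R_i = min(Y_i, C_i)`. -/
theorem risk_set_update_identity
    (N : ℕ) (τe Y C : Fin N → ℝ) (hY : ∀ i, 0 < Y i) (hC : ∀ i, 0 < C i)
    (τt τt1 : ℝ) (hτ : τt ≤ τt1) :
    ∀ s : ℝ,
      {i : Fin N | s ≤ min (Y i) (min (C i) (max (τt1 - τe i) 0))} =
        {i : Fin N | s ≤ min (Y i) (min (C i) (max (τt - τe i) 0))} ∪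
          {i : Fin N | τt < τe i + min (Y i) (C i) ∧
            max (τt - τe i) 0 < s ∧ s ≤ min (max (τt1 - τe i) 0) (min (Y i) (C i))} := by
  intro s
  ext i
  simp only [Set.mem_setOf_eq, Set.mem_union, le_min_iff, lt_min_iff, max_lt_iff]
  constructor
  · rintro ⟨h1, h2, h3⟩
    rcases le_or_gt s (max (τt - τe i) 0) with h | h
    · exact Or.inl ⟨h1, h2, h⟩
    · have h' : τt - τe i < s := lt_of_le_of_lt (le_max_left _ _) h
      have h0 : (0:ℝ) < s := lt_of_le_of_lt (le_max_right _ _) h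
      refine Or.inr ⟨?_, ⟨h', h0⟩, h3, h1, h2⟩
      rcases le_total (Y i) (C i) with hyc | hyc
      · rw [min_eq_left hyc]; linarith
      · rw [min_eq_right hyc]; linarith
  · rintro (⟨h1, h2, h3⟩ | ⟨h0, ⟨h', hpos⟩, h3, h1, h2⟩)
    · exact ⟨h1, h2, h3.trans (max_le_max (by linarith) le_rfl)⟩
    · exact ⟨h1, h2, h3⟩
end

section
/- Let τ_t ≤ τ_{t+1} be two calendar times. Then the log partial likelihood satisfies the online update identity l(τ_{t+1}, β) = l(τ_t, β) + P_1 + P_2, where P_1 = Σ_{i ∈ E(τ_{t+1}) \ E(τ_t)} [X_iᵀβ − log Σ_{j ∈ R(τ_{t+1}, Y_i)} exp(X_jᵀβ)] is the contribution of newly observed events, and P_2 = Σ_{i ∈ E(τ_t)} log( Σ_{j ∈ R(τ_t, Y_i)} exp(X_jᵀβ) / Σ_{j ∈ R(τ_{t+1}, Y_i)} exp(X_jᵀβ) ) is the correction for the change in risk sets at previously observed event times. -/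
open Matrix Finset

/-- The risk set at calendar time `τ` and survival time `s`. -/
noncomputable def riskSet (N : ℕ) (τe Y C : Fin N → ℝ) (τ s : ℝ) : Finset (Fin N) :=
  Finset.univ.filter fun i => s ≤ min (Y i) (min (C i) (max (τ - τe i) 0))

/-- The set of events observed by calendar time `τ`. -/
noncomputable def eventSet (N : ℕ) (τe Y C : Fin N → ℝ) (τ : ℝ) : Finset (Fin N) :=
  Finset.univ.filter fun i => Y i ≤ C i ∧ Y i ≤ max (τ - τe i) 0

/-- The log partial likelihood at calendar time `τ`. -/
noncomputable def logPartialLik (N d : ℕ) (τe Y C : Fin N → ℝ)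
    (X : Fin N → Fin d → ℝ) (β : Fin d → ℝ) (τ : ℝ) : ℝ :=
  ∑ i ∈ eventSet N τe Y C τ,
    (X i ⬝ᵥ β - Real.log (∑ j ∈ riskSet N τe Y C τ (Y i), Real.exp (X j ⬝ᵥ β)))

lemma eventSet_mono (N : ℕ) (τe Y C : Fin N → ℝ) {τ τ' : ℝ} (h : τ ≤ τ') :
    eventSet N τe Y C τ ⊆ eventSet N τe Y C τ' := by
  intro i hi
  simp only [eventSet, mem_filter, mem_univ, true_and] at hi ⊢
  exact ⟨hi.1, hi.2.trans (max_le_max (by linarith) le_rfl)⟩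

lemma sum_exp_pos {N : ℕ} {τe Y C : Fin N → ℝ} {τ : ℝ} {i : Fin N}
    (hi : i ∈ eventSet N τe Y C τ) {d : ℕ} (X : Fin N → Fin d → ℝ) (β : Fin d → ℝ) :
    0 < ∑ j ∈ riskSet N τe Y C τ (Y i), Real.exp (X j ⬝ᵥ β) := by
  simp only [eventSet, mem_filter, mem_univ, true_and] at hi
  have hmem : i ∈ riskSet N τe Y C τ (Y i) := by
    simp only [riskSet, mem_filter, mem_univ, true_and, le_min_iff]
    exact ⟨le_rfl, hi.1, hi.2⟩
  exact Finset.sum_pos' (fun j _ => (Real.exp_pos _).le)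
    ⟨i, hmem, Real.exp_pos _⟩

/-- the online update identity `l(τ_{t+1}, β) = l(τ_t, β) + P₁ + P₂`, where
`P₁` is the contribution of newly observed events and `P₂` corrects for the change of
the risk sets at previously observed event times. -/
theorem log_partial_lik_online_update
    (N d : ℕ) (τe Y C : Fin N → ℝ) (hY : ∀ i, 0 < Y i) (hC : ∀ i, 0 < C i)
    (X : Fin N → Fin d → ℝ) (β : Fin d → ℝ)
    (τt τt1 : ℝ) (hτ : τt ≤ τt1) :
    logPartialLik N d τe Y C X β τt1 =
      logPartialLik N d τe Y C X β τt
      + (∑ i ∈ eventSet N τe Y C τt1 \ eventSet N τe Y C τt,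
          (X i ⬝ᵥ β - Real.log (∑ j ∈ riskSet N τe Y C τt1 (Y i), Real.exp (X j ⬝ᵥ β))))
      + (∑ i ∈ eventSet N τe Y C τt,
          Real.log ((∑ j ∈ riskSet N τe Y C τt (Y i), Real.exp (X j ⬝ᵥ β)) /
            (∑ j ∈ riskSet N τe Y C τt1 (Y i), Real.exp (X j ⬝ᵥ β)))) := by
  have hsub := eventSet_mono N τe Y C hτ
  unfold logPartialLik
  rw [← Finset.sum_sdiff hsub]
  have hstep : ∀ i ∈ eventSet N τe Y C τt,
      (X i ⬝ᵥ β - Real.log (∑ j ∈ riskSet N τe Y C τt1 (Y i), Real.exp (X j ⬝ᵥ β)))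
      = (X i ⬝ᵥ β - Real.log (∑ j ∈ riskSet N τe Y C τt (Y i), Real.exp (X j ⬝ᵥ β)))
        + Real.log ((∑ j ∈ riskSet N τe Y C τt (Y i), Real.exp (X j ⬝ᵥ β)) /
            (∑ j ∈ riskSet N τe Y C τt1 (Y i), Real.exp (X j ⬝ᵥ β))) := by
    intro i hi
    rw [Real.log_div (sum_exp_pos hi X β).ne' (sum_exp_pos (hsub hi) X β).ne']
    ring
  rw [Finset.sum_congr rfl hstep, Finset.sum_add_distrib]
  ring
end

section
/- Let E be a finite index set, and for each i ∈ E let x_i ∈ ℝ^d and let R_i be a finite nonempty index set with vectors x_j ∈ ℝ^d for j ∈ R_i. Then the log partial likelihood β ↦ Σ_{i ∈ E} [⟨x_i, β⟩ − log Σ_{j ∈ R_i} exp(⟨x_j, β⟩)] is a concave function on ℝ^d. -/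
open scoped RealInnerProductSpace BigOperators

open Finset Real Set

/-! Each summand is a linear functional minus a log-sum-exp of linear functionals, so it suffices
that log-sum-exp is convex. Hölder's inequality with the conjugate exponents `1/a`, `1/b` gives
`∑ exp (a p_j + b q_j) ≤ (∑ exp p_j) ^ a * (∑ exp q_j) ^ b`, and taking logarithms is exactly the
convexity inequality. -/

theorem Real.sum_rpow_mul_rpow_le {ι : Type*} (s : Finset ι) {f g : ι → ℝ}
    (hf : ∀ i ∈ s, 0 ≤ f i) (hg : ∀ i ∈ s, 0 ≤ g i) {a b : ℝ} (ha : 0 < a) (hb : 0 < b)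
    (hab : a + b = 1) :
    ∑ i ∈ s, f i ^ a * g i ^ b ≤ (∑ i ∈ s, f i) ^ a * (∑ i ∈ s, g i) ^ b := by
  have hpq : HolderConjugate a⁻¹ b⁻¹ := by
    rw [holderConjugate_iff, inv_inv, inv_inv]
    exact ⟨(one_lt_inv₀ ha).2 (by linarith), hab⟩
  have := inner_le_Lp_mul_Lq_of_nonneg s hpq (f := fun i => f i ^ a) (g := fun i => g i ^ b)
    (fun i hi => rpow_nonneg (hf i hi) _) (fun i hi => rpow_nonneg (hg i hi) _)
  simpa [sum_congr rfl fun i hi => rpow_rpow_inv (hf i hi) ha.ne',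
    sum_congr rfl fun i hi => rpow_rpow_inv (hg i hi) hb.ne'] using this

theorem convexOn_log_sum_exp_inner {E κ : Type*} [NormedAddCommGroup E] [InnerProductSpace ℝ E]
    (s : Finset κ) (y : κ → E) :
    ConvexOn ℝ univ fun β : E => log (∑ j ∈ s, exp ⟪y j, β⟫) := by
  obtain rfl | hs := s.eq_empty_or_nonempty
  · -- the empty sum gives the constant `log 0 = 0`
    simpa using convexOn_const (0 : ℝ) convex_univ
  have sum_exp_pos : ∀ β : E, 0 < ∑ j ∈ s, exp ⟪y j, β⟫ := fun β =>
    sum_pos (fun j _ => exp_pos _) hs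
  refine convexOn_iff_forall_pos.2 ⟨convex_univ, fun u _ v _ a b ha hb hab => ?_⟩
  calc log (∑ j ∈ s, exp ⟪y j, a • u + b • v⟫)
      = log (∑ j ∈ s, exp ⟪y j, u⟫ ^ a * exp ⟪y j, v⟫ ^ b) := by
        simp only [inner_add_right, inner_smul_right, exp_add, ← exp_mul, mul_comm]
    _ ≤ log ((∑ j ∈ s, exp ⟪y j, u⟫) ^ a * (∑ j ∈ s, exp ⟪y j, v⟫) ^ b) :=
        log_le_log (sum_pos (fun j _ => by positivity) hs) <|
          sum_rpow_mul_rpow_le s (fun j _ => (exp_pos _).le) (fun j _ => (exp_pos _).le) ha hb hab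
    _ = a • log (∑ j ∈ s, exp ⟪y j, u⟫) + b • log (∑ j ∈ s, exp ⟪y j, v⟫) := by
        rw [log_mul (by positivity) (by positivity), log_rpow (sum_exp_pos u),
          log_rpow (sum_exp_pos v), smul_eq_mul, smul_eq_mul]

theorem ConcaveOn.finset_sum {𝕜 E β ι : Type*} [Semiring 𝕜] [PartialOrder 𝕜] [AddCommMonoid E]
    [AddCommMonoid β] [PartialOrder β] [IsOrderedAddMonoid β] [SMul 𝕜 E] [Module 𝕜 β]
    {s : Set E} (hs : Convex 𝕜 s) (t : Finset ι) {f : ι → E → β}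
    (hf : ∀ i ∈ t, ConcaveOn 𝕜 s (f i)) :
    ConcaveOn 𝕜 s fun x => ∑ i ∈ t, f i x := by
  simpa only [← sum_fn] using
    sum_induction f (ConcaveOn 𝕜 s) (fun _ _ => ConcaveOn.add) (concaveOn_const (0 : β) hs)
      hf

theorem log_partial_lik_concave_general
    {d : ℕ} {ι κ : Type*} (E : Finset ι)
    (x : ι → EuclideanSpace ℝ (Fin d))
    (R : ι → Finset κ)
    (y : ι → κ → EuclideanSpace ℝ (Fin d)) :
    ConcaveOn ℝ Set.univ
      (fun β : EuclideanSpace ℝ (Fin d) =>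
        ∑ i ∈ E, (⟪x i, β⟫ - Real.log (∑ j ∈ R i, Real.exp ⟪y i j, β⟫))) :=
  ConcaveOn.finset_sum convex_univ E fun i _ =>
    ((innerₛₗ ℝ (x i)).concaveOn convex_univ).sub (convexOn_log_sum_exp_inner (R i) (y i))

/-- the Cox log partial likelihood
`β ↦ Σ_{i∈E} [⟪x_i, β⟫ − log Σ_{j∈R_i} exp⟪x_{ij}, β⟫]` is concave on `ℝ^d`. -/
theorem log_partial_lik_concave
    {d : ℕ} {ι κ : Type*} (E : Finset ι)
    (x : ι → EuclideanSpace ℝ (Fin d))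
    (R : ι → Finset κ) (hR : ∀ i ∈ E, (R i).Nonempty)
    (y : ι → κ → EuclideanSpace ℝ (Fin d)) :
    ConcaveOn ℝ Set.univ
      (fun β : EuclideanSpace ℝ (Fin d) =>
        ∑ i ∈ E, (⟪x i, β⟫ - Real.log (∑ j ∈ R i, Real.exp ⟪y i j, β⟫))) :=
  log_partial_lik_concave_general E x R y
end

section
/- Let S₀ ∈ (0,1]. Then the function g(z) = S₀^{exp(z)} is differentiable on ℝ and its derivative satisfies |g'(z)| = exp(z) · (−log S₀) · S₀^{exp(z)} ≤ 1/e for every z ∈ ℝ. -/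
/-- for `S₀ ∈ (0,1]`, `g(z) = S₀^{exp z}` is differentiable on `ℝ` and
`|g'(z)| = exp(z)·(−log S₀)·S₀^{exp z} ≤ 1/e` for every `z`. -/
theorem survival_prob_deriv_bound
    (S₀ : ℝ) (hS₀ : S₀ ∈ Set.Ioc (0 : ℝ) 1) :
    Differentiable ℝ (fun z : ℝ => S₀ ^ Real.exp z) ∧
    ∀ z : ℝ,
      |deriv (fun z : ℝ => S₀ ^ Real.exp z) z|
        = Real.exp z * (-Real.log S₀) * S₀ ^ Real.exp z ∧
      |deriv (fun z : ℝ => S₀ ^ Real.exp z) z| ≤ 1 / Real.exp 1 := by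
  obtain ⟨hpos, hle⟩ := hS₀
  have hlog : Real.log S₀ ≤ 0 := Real.log_nonpos (le_of_lt hpos) hle
  have hfun : (fun z : ℝ => S₀ ^ Real.exp z)
      = fun z : ℝ => Real.exp (Real.log S₀ * Real.exp z) := by
    funext z
    rw [Real.rpow_def_of_pos hpos, mul_comm]
  have hder : ∀ z : ℝ, HasDerivAt (fun z : ℝ => S₀ ^ Real.exp z)
      (Real.exp (Real.log S₀ * Real.exp z) * (Real.log S₀ * Real.exp z)) z := by
    intro z
    rw [hfun]
    exact ((Real.hasDerivAt_exp z).const_mul (Real.log S₀)).exp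
  have hdiff : Differentiable ℝ (fun z : ℝ => S₀ ^ Real.exp z) :=
    fun z => (hder z).differentiableAt
  refine ⟨hdiff, fun z => ?_⟩
  have hd := (hder z).deriv
  have hrw : S₀ ^ Real.exp z = Real.exp (Real.log S₀ * Real.exp z) := by
    rw [Real.rpow_def_of_pos hpos, mul_comm]
  have habs : |deriv (fun z : ℝ => S₀ ^ Real.exp z) z|
      = Real.exp z * (-Real.log S₀) * S₀ ^ Real.exp z := by
    rw [hd, hrw, abs_mul, abs_of_pos (Real.exp_pos _), abs_mul,
      abs_of_nonpos hlog, abs_of_pos (Real.exp_pos _)]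
    ring
  refine ⟨habs, ?_⟩
  rw [habs, hrw]
  set t : ℝ := Real.exp z * (-Real.log S₀) with ht
  have htnn : 0 ≤ t := mul_nonneg (le_of_lt (Real.exp_pos _)) (by linarith)
  have hexp : Real.exp (Real.log S₀ * Real.exp z) = Real.exp (-t) := by
    congr 1; rw [ht]; ring
  rw [hexp]
  -- t * exp (-t) ≤ 1 / e
  have key : t * Real.exp (-t) ≤ 1 / Real.exp 1 := by
    rw [div_eq_mul_inv, one_mul, ← Real.exp_neg]
    have h1 : t ≤ Real.exp (t - 1) := by
      have := Real.add_one_le_exp (t - 1)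
      linarith
    calc t * Real.exp (-t) ≤ Real.exp (t - 1) * Real.exp (-t) :=
          mul_le_mul_of_nonneg_right h1 (le_of_lt (Real.exp_pos _))
      _ = Real.exp (-1) := by rw [← Real.exp_add]; ring_nf
  exact key
end

section
/- Let S₀ ∈ (0,1], let T ≥ 1, and let u_1,…,u_T and v_1,…,v_T be real numbers with v_t ≤ u_t for every t. Then Σ_{t=1}^T ( S₀^{exp(v_t)} − S₀^{exp(u_t)} ) ≤ (1/e) · Σ_{t=1}^T (u_t − v_t). In particular, the cumulative regret in survival probability is bounded by 1/e times the cumulative gap in linear predictors. -/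
open BigOperators

lemma aux_t_exp_neg (t : ℝ) (ht : 0 ≤ t) : t * Real.exp (-t) ≤ 1 / Real.exp 1 := by
  have h1 : t ≤ Real.exp (t - 1) := by
    have := Real.add_one_le_exp (t - 1)
    linarith
  have h2 : Real.exp (t - 1) = Real.exp t / Real.exp 1 := by
    rw [Real.exp_sub]
  rw [h2] at h1
  have h3 : t * Real.exp (-t) ≤ (Real.exp t / Real.exp 1) * Real.exp (-t) := by
    apply mul_le_mul_of_nonneg_right h1 (Real.exp_nonneg _)
  calc t * Real.exp (-t) ≤ (Real.exp t / Real.exp 1) * Real.exp (-t) := h3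
    _ = (Real.exp t * Real.exp (-t)) / Real.exp 1 := by ring
    _ = 1 / Real.exp 1 := by rw [← Real.exp_add]; simp

lemma aux_mono (c : ℝ) (hc : 0 ≤ c) :
    Monotone (fun x : ℝ => x / Real.exp 1 + Real.exp (Real.exp x * (-c))) := by
  apply monotone_of_deriv_nonneg
  · fun_prop
  · intro x
    have hd : HasDerivAt (fun x : ℝ => x / Real.exp 1 + Real.exp (Real.exp x * (-c)))
        (1 / Real.exp 1 + Real.exp (Real.exp x * (-c)) * (Real.exp x * (-c))) x := by
      have h1 : HasDerivAt (fun x : ℝ => Real.exp x * (-c)) (Real.exp x * (-c)) x :=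
        (Real.hasDerivAt_exp x).mul_const _
      have h2 := Real.hasDerivAt_exp (Real.exp x * (-c))
      have h3 := h2.comp x h1
      have h4 : HasDerivAt (fun x : ℝ => x / Real.exp 1) (1 / Real.exp 1) x := by
        simpa using (hasDerivAt_id x).div_const (Real.exp 1)
      exact h4.add h3
    rw [hd.deriv]
    have key : (c * Real.exp x) * Real.exp (-(c * Real.exp x)) ≤ 1 / Real.exp 1 :=
      aux_t_exp_neg _ (mul_nonneg hc (Real.exp_nonneg _))
    have : Real.exp (Real.exp x * (-c)) * (Real.exp x * c) ≤ 1 / Real.exp 1 := by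
      have heq : Real.exp x * (-c) = -(c * Real.exp x) := by ring
      rw [heq]
      nlinarith [key]
    nlinarith [this]

lemma aux_pointwise (S₀ : ℝ) (hS₀ : S₀ ∈ Set.Ioc (0 : ℝ) 1) (a b : ℝ) (hab : b ≤ a) :
    S₀ ^ Real.exp b - S₀ ^ Real.exp a ≤ (1 / Real.exp 1) * (a - b) := by
  obtain ⟨hpos, hle⟩ := hS₀
  have hlog : Real.log S₀ ≤ 0 := Real.log_nonpos (le_of_lt hpos) hle
  set c := -Real.log S₀ with hc
  have hc0 : 0 ≤ c := by simp [hc]; exact hlog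
  have hrw : ∀ y : ℝ, S₀ ^ Real.exp y = Real.exp (Real.exp y * (-c)) := by
    intro y
    rw [Real.rpow_def_of_pos hpos, hc]
    ring_nf
  have := aux_mono c hc0 hab
  simp only at this
  have h1 : b / Real.exp 1 + Real.exp (Real.exp b * (-c))
      ≤ a / Real.exp 1 + Real.exp (Real.exp a * (-c)) := this
  rw [hrw b, hrw a]
  have he : (0:ℝ) < Real.exp 1 := Real.exp_pos 1
  have : 1 / Real.exp 1 * (a - b) = a / Real.exp 1 - b / Real.exp 1 := by
    field_simp
  linarith

/-- for `S₀ ∈ (0,1]` and reals `v_t ≤ u_t`, the cumulative regret in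
survival probability is bounded by `1/e` times the cumulative gap in linear predictors:
`Σ_t (S₀^{exp v_t} − S₀^{exp u_t}) ≤ (1/e) Σ_t (u_t − v_t)`. -/
theorem cumulative_regret_le_linear_gap
    (S₀ : ℝ) (hS₀ : S₀ ∈ Set.Ioc (0 : ℝ) 1)
    (T : ℕ) (hT : 1 ≤ T) (u v : Fin T → ℝ) (h : ∀ t, v t ≤ u t) :
    ∑ t, (S₀ ^ Real.exp (v t) - S₀ ^ Real.exp (u t))
      ≤ (1 / Real.exp 1) * ∑ t, (u t - v t) := by
  rw [Finset.mul_sum]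
  apply Finset.sum_le_sum
  intro t _
  exact aux_pointwise S₀ hS₀ (u t) (v t) (h t)
end
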